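/- Let a > 0, b > 0, A ≤ 0, B ∈ ℝ and h > 0, and define L(h, r) = A / (1 + a·exp(−b·((180/π)·arctan(h/r) − a))) + 10·log₁₀(h² + r²) + B. If R > 0 satisfies L(h, R) = T, then { r ∈ ℝ : 0 < r ∧ L(h, r) ≤ T } = (0, R], i.e., a point at horizontal distance r > 0 from the point below the UAV satisfies the path-loss requirement L(h, r) ≤ T if and only if r ≤ R. Consequently, the coverage region for threshold T is a circular disc of radius R centered at the UAV's horizontal location. -/

import Mathlib

/-!
The path loss is strictly increasing in the horizontal distance `r > 0`: the elevation angle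
`arctan (h / r)` decreases, hence so does the line-of-sight probability, which (as `A ≤ 0`)
makes the first term increase weakly, while `log (h² + r²)` increases strictly. The sublevel set
of a strictly increasing function on `(0, ∞)` at its value at `R` is `(0, R]`.
-/

open Real Set

noncomputable def pathLoss (a b A B h r : ℝ) : ℝ :=
  A / (1 + a * exp (-b * ((180 / π) * arctan (h / r) - a))) + 10 * logb 10 (h ^ 2 + r ^ 2) + B

lemma StrictMonoOn.setOf_mem_and_le_eq {f : ℝ → ℝ} {s : Set ℝ} (hf : StrictMonoOn f s)
    {R : ℝ} (hR : R ∈ s) : {r | r ∈ s ∧ f r ≤ f R} = s ∩ Iic R := by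
  ext r
  simp only [mem_ofPred_eq, mem_inter_iff, mem_Iic, and_congr_right_iff]
  exact fun hr => hf.le_iff_le hr hR

lemma antitone_div_one_add_mul_exp {A a b c : ℝ} (hA : A ≤ 0) (ha : 0 ≤ a) (hb : 0 ≤ b)
    (hc : 0 ≤ c) : Antitone fun θ => A / (1 + a * exp (-b * (c * θ - a))) := by
  intro x y hxy
  have hexp : exp (-b * (c * y - a)) ≤ exp (-b * (c * x - a)) :=
    exp_le_exp.2 (by nlinarith [mul_le_mul_of_nonneg_left hxy hc])
  have hden : 1 + a * exp (-b * (c * y - a)) ≤ 1 + a * exp (-b * (c * x - a)) := by gcongr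
  simp only [div_eq_mul_inv]
  exact mul_le_mul_of_nonpos_left (inv_anti₀ (by positivity) hden) hA

lemma strictAntiOn_arctan_div {h : ℝ} (hh : 0 < h) :
    StrictAntiOn (fun r => arctan (h / r)) (Ioi 0) :=
  fun _ hx _ _ hxy => arctan_strictMono (div_lt_div_of_pos_left hh hx hxy)

lemma strictMonoOn_logb_sq_add_sq (h : ℝ) :
    StrictMonoOn (fun r => logb 10 (h ^ 2 + r ^ 2)) (Ioi 0) := by
  intro x (hx : 0 < x) y _ hxy
  exact logb_lt_logb (by norm_num) (by positivity) (by gcongr)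

lemma strictMonoOn_pathLoss {a b A B h : ℝ} (ha : 0 ≤ a) (hb : 0 ≤ b) (hA : A ≤ 0)
    (hh : 0 < h) : StrictMonoOn (pathLoss a b A B h) (Ioi 0) := by
  intro x hx y hy hxy
  have hlos := antitone_div_one_add_mul_exp hA ha hb (by positivity : 0 ≤ 180 / π)
    (strictAntiOn_arctan_div hh hx hy hxy).le
  have hlog := strictMonoOn_logb_sq_add_sq h hx hy hxy
  simp only [pathLoss] at hlos hlog ⊢
  linarith

/-- The coverage region for a threshold `T` is the disc of radius `R` where
`L(h, R) = T`: a point at horizontal distance `r > 0` is covered iff `r ≤ R`. -/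
theorem stmt_5 (a b A B h : ℝ) (ha : 0 < a) (hb : 0 < b) (hA : A ≤ 0) (hh : 0 < h)
    (R T : ℝ) (hR : 0 < R)
    (hRT : A / (1 + a * Real.exp (-b * ((180 / Real.pi) * Real.arctan (h / R) - a)))
        + 10 * Real.logb 10 (h ^ 2 + R ^ 2) + B = T) :
    {r : ℝ | 0 < r ∧
      A / (1 + a * Real.exp (-b * ((180 / Real.pi) * Real.arctan (h / r) - a)))
        + 10 * Real.logb 10 (h ^ 2 + r ^ 2) + B ≤ T} = Set.Ioc 0 R := by
  subst hRT
  exact (strictMonoOn_pathLoss (B := B) ha.le hb.le hA hh).setOf_mem_and_le_eq (mem_Ioi.2 hR)
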